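/- Let 0 < ζ ≤ 1/k and let m₁ = (0, ζ, 2ζ, …, (k-1)ζ) ∈ ℝ^k. Then the k-th largest singular value of the k×k Vandermonde matrix V(m₁) (entries (m₁)_j^i for i = 0,…,k-1) satisfies σ_k(V(m₁)) ≤ k!·ζ^{k-1}. -/

import Mathlib

/-! Write `k = n + 1`. The alternating binomial weights `w j = (-1)^(n-j) * C(n, j)` compute the
`n`-th forward difference at `0`, so row `i` of `V(m₁)ᵀ` applied to `w` gives `ζ^i Δⁿ(x^i)(0)`,
which vanishes for `i < n` and equals `n! ζ^n` for `i = n`. Hence `V(m₁)ᵀ w = n! ζ^n e_n`, while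
`‖w‖ ≥ |w n| = 1`. The only subspace of full dimension is the whole space, so testing the max–min
characterisation on `w / ‖w‖` gives `σ_k ≤ n! ζ^n ≤ k! ζ^(k-1)`. -/

open Matrix Finset

/-- Euclidean norm of a finitely-indexed real vector. -/
noncomputable def e2 {n : Type*} [Fintype n] (x : n → ℝ) : ℝ :=
  Real.sqrt (∑ i, x i ^ 2)

/-- The `j`-th largest singular value of a real matrix, via the Courant–Fischer
max–min characterization: the supremum over `j`-dimensional subspaces of the
infimum of `‖A x‖₂` over unit vectors `x` in the subspace. -/
noncomputable def sval {m' n : Type*} [Fintype m'] [Fintype n] (A : Matrix m' n ℝ) (j : ℕ) : ℝ :=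
  ⨆ V : {V : Submodule ℝ (n → ℝ) // Module.finrank ℝ V = j},
    ⨅ x : {x : n → ℝ // x ∈ V.1 ∧ e2 x = 1}, e2 (A.mulVec x.1)

/-- Hadamard extension: rows indexed by subsets `S ⊆ [n]`, entry `(S, j)` equal
to `∏ i ∈ S, m i j`. -/
noncomputable def hadamardExt {n k : ℕ} (m : Matrix (Fin n) (Fin k) ℝ) :
    Matrix (Finset (Fin n)) (Fin k) ℝ :=
  Matrix.of fun S j => ∏ i ∈ S, m i j

/-- The `L₂ → L₂` operator norm of a real matrix. -/
noncomputable def opN {m' n : Type*} [Fintype m'] [Fintype n] (A : Matrix m' n ℝ) : ℝ :=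
  ⨆ x : {x : n → ℝ // e2 x = 1}, e2 (A.mulVec x.1)

section EuclideanNorm

variable {n : Type*} [Fintype n]

lemma e2_nonneg (x : n → ℝ) : 0 ≤ e2 x := Real.sqrt_nonneg _

lemma e2_smul (a : ℝ) (x : n → ℝ) : e2 (a • x) = |a| * e2 x := by
  rw [e2, e2, ← Real.sqrt_sq_eq_abs, ← Real.sqrt_mul (sq_nonneg a), mul_sum]
  simp only [Pi.smul_apply, smul_eq_mul, mul_pow]

lemma abs_le_e2 (x : n → ℝ) (i : n) : |x i| ≤ e2 x := by
  rw [← Real.sqrt_sq_eq_abs]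
  exact Real.sqrt_le_sqrt <| single_le_sum (fun j _ ↦ sq_nonneg (x j)) (mem_univ i)

lemma e2_single [DecidableEq n] (i : n) (a : ℝ) : e2 (Pi.single i a) = |a| := by
  rw [e2, sum_eq_single i (fun j _ hj ↦ by simp [hj]) (by simp), Pi.single_eq_same,
    Real.sqrt_sq_eq_abs]

end EuclideanNorm

lemma sval_card_le_of_one_le_e2 {m' n : Type*} [Fintype m'] [Fintype n] (A : Matrix m' n ℝ)
    {x : n → ℝ} (hx : 1 ≤ e2 x) : sval A (Fintype.card n) ≤ e2 (A *ᵥ x) := by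
  have hx₀ : 0 < e2 x := one_pos.trans_le hx
  refine Real.iSup_le (fun ⟨V, hV⟩ ↦ ?_) (e2_nonneg _)
  have hV_top : V = ⊤ := Submodule.eq_top_of_finrank_eq (by simpa using hV)
  have hunit : e2 ((e2 x)⁻¹ • x) = 1 := by
    rw [e2_smul, abs_of_pos (inv_pos.2 hx₀), inv_mul_cancel₀ hx₀.ne']
  refine ciInf_le_of_le ⟨0, ?_⟩ ⟨(e2 x)⁻¹ • x, by simp [hV_top], hunit⟩ ?_
  · rintro _ ⟨y, rfl⟩
    exact e2_nonneg _
  · rw [mulVec_smul, e2_smul, abs_of_pos (inv_pos.2 hx₀)]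
    exact mul_le_of_le_one_left (e2_nonneg _) (inv_le_one_of_one_le₀ hx)

section ForwardDifference

open scoped fwdDiff

def fwdDiffWeights (R : Type*) [CommRing R] (n : ℕ) (j : Fin (n + 1)) : R :=
  (-1) ^ (n - j) * n.choose j

variable {R : Type*} [CommRing R]

lemma sum_fwdDiffWeights_mul_pow (n i : ℕ) :
    ∑ j : Fin (n + 1), fwdDiffWeights R n j * ((j : ℕ) : R) ^ i =
      (Δ_[1])^[n] (fun r : R ↦ r ^ i) 0 := by
  rw [fwdDiff_iter_eq_sum_shift, ← Fin.sum_univ_eq_sum_range]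
  refine sum_congr rfl fun j _ ↦ ?_
  simp [fwdDiffWeights, zsmul_eq_mul]

lemma vandermonde_arith_transpose_mulVec_fwdDiffWeights (n : ℕ) (a : R) :
    (vandermonde fun j : Fin (n + 1) ↦ (j : ℕ) * a)ᵀ *ᵥ fwdDiffWeights R n =
      Pi.single (Fin.last n) (a ^ n * n.factorial) := by
  ext i
  have hrow : ((vandermonde fun j : Fin (n + 1) ↦ (j : ℕ) * a)ᵀ *ᵥ fwdDiffWeights R n) i =
      a ^ (i : ℕ) * (Δ_[1])^[n] (fun r : R ↦ r ^ (i : ℕ)) 0 := by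
    rw [← sum_fwdDiffWeights_mul_pow, mulVec, dotProduct, mul_sum]
    refine sum_congr rfl fun j _ ↦ ?_
    simp only [transpose_apply, vandermonde_apply, mul_pow]
    ring
  rw [hrow]
  rcases (Fin.le_last i).lt_or_eq with hi | rfl
  · rw [fwdDiff_iter_pow_eq_zero_of_lt (Fin.lt_last_iff_ne_last.1 hi |> Fin.val_lt_last),
      Pi.zero_apply, mul_zero, Pi.single_eq_of_ne hi.ne]
  · simp [fwdDiff_iter_eq_factorial]

lemma one_le_e2_fwdDiffWeights (n : ℕ) : 1 ≤ e2 (fwdDiffWeights ℝ n) :=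
  le_of_eq_of_le (by simp [fwdDiffWeights]) (abs_le_e2 _ (Fin.last n))

end ForwardDifference

theorem stmt12_general (k : ℕ) (hk : 1 ≤ k) (ζ : ℝ) (hζ : 0 < ζ) :
    sval ((Matrix.vandermonde fun j : Fin k => (j : ℕ) * ζ)ᵀ) k ≤
      (Nat.factorial k : ℝ) * ζ ^ (k - 1) := by
  obtain ⟨n, rfl⟩ : ∃ n, k = n + 1 := ⟨k - 1, by omega⟩
  calc sval ((vandermonde fun j : Fin (n + 1) ↦ (j : ℕ) * ζ)ᵀ) (n + 1)
      ≤ e2 ((vandermonde fun j : Fin (n + 1) ↦ (j : ℕ) * ζ)ᵀ *ᵥ fwdDiffWeights ℝ n) := by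
        simpa using sval_card_le_of_one_le_e2 _ (one_le_e2_fwdDiffWeights n)
    _ = ζ ^ n * n.factorial := by
        rw [vandermonde_arith_transpose_mulVec_fwdDiffWeights, e2_single,
          abs_of_nonneg (by positivity)]
    _ ≤ (n + 1).factorial * ζ ^ (n + 1 - 1) := by
        rw [Nat.add_sub_cancel, mul_comm]
        gcongr
        exact n.le_succ

/-- for 0 < ζ ≤ 1/k and nodes m₁ = (0, ζ, …, (k-1)ζ), the smallest
singular value of the k×k Vandermonde matrix (entries (m₁)_j^i) is ≤ k!·ζ^{k-1}. -/
theorem stmt12 (k : ℕ) (hk : 1 ≤ k) (ζ : ℝ) (hζ : 0 < ζ) (hζk : ζ ≤ 1 / k) :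
    sval ((Matrix.vandermonde fun j : Fin k => (j : ℕ) * ζ)ᵀ) k ≤
      (Nat.factorial k : ℝ) * ζ ^ (k - 1) :=
  stmt12_general k hk ζ hζ
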